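/- arXiv:2102.05010 — 6 statements merged into one kernel-verified Lean document; each statement's English description precedes it below -/
import Mathlib

section
/- Let R be a commutative ring and n ≥ 5. Let w ∈ R^{C(n,2)} be a vector (with coordinates w_{ij}, i < j) whose coordinates satisfy all short Plücker relations: for every i ∈ {1,…,n} and every 3-element subset {a,b,c} ⊆ {1,…,n} with a < b < c, the relation w_{bc}w_{ai} − w_{ac}w_{bi} + w_{ab}w_{ci} = 0 holds (with the skew-symmetric convention w_{ji} = −w_{ij}, w_{ii} = 0). Then the matrix T₁ = ⋀²t_{2,3}(w_{45})·⋀²t_{2,4}(−w_{35})·⋀²t_{2,5}(w_{34}) satisfies T₁·w = w. -/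
open Matrix

/-- Index set `⋀²[n]`: ordered pairs `(i₁,i₂)` with `i₁ < i₂`. -/
abbrev Pair (n : ℕ) := {p : Fin n × Fin n // p.1 < p.2}

/-- The exterior square (second compound matrix): entries are the `2×2` minors. -/
def ext2 {R : Type*} [CommRing R] {n : ℕ} (x : Matrix (Fin n) (Fin n) R) :
    Matrix (Pair n) (Pair n) R :=
  fun I J => x I.1.1 J.1.1 * x I.1.2 J.1.2 - x I.1.1 J.1.2 * x I.1.2 J.1.1

/-- `sign(a,b) ∈ R`. -/
def sgn (R : Type*) [Ring R] {n : ℕ} (a b : Fin n) : R := if a < b then 1 else -1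

def step {R : Type*} [CommRing R] {n : ℕ} (i j : Fin n) (ξ : R) (W : Fin n → Fin n → R) :
    Fin n → Fin n → R :=
  fun a b => W a b + ξ * ((if a = i then W j b else 0) + (if b = i then W a j else 0))

lemma myIteOneMul {R : Type*} [CommRing R] (c : Prop) [Decidable c] (t : R) :
    (if c then t else 0) = (if c then 1 else 0) * t := by split_ifs <;> simp

lemma ite_and_split {R : Type*} [CommRing R] (P Q : Prop) [Decidable P] [Decidable Q] (t : R) :
    (if P ∧ Q then t else 0) = (if P then (1:R) else 0) * (if Q then t else 0) := by
  split_ifs with h h1 h2 <;> simp_all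

lemma gen {R : Type*} [CommRing R] {n : ℕ} (c d : Fin n) (u v : R) (f : Fin n → Fin n → R) :
    (∑ x : Fin n, ∑ y : Fin n,
      (if x < y then (1:R) else 0) * (if c = x then u else 0) * (if d = y then v else 0) * f x y)
      = if c < d then u * v * f c d else 0 := by
  have hpt : ∀ x y : Fin n,
      (if x < y then (1:R) else 0) * (if c = x then u else 0) * (if d = y then v else 0) * f x y
        = if d = y then (if c = x then (if x < y then u * v * f x y else 0) else 0) else 0 := by
    intro x y; split_ifs <;> ring
  simp only [hpt]
  simp [Finset.sum_ite_eq]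

lemma key {R : Type*} [CommRing R] {n : ℕ} (W : Fin n → Fin n → R)
    (hskew : ∀ a b, W a b = - W b a) (hdiag : ∀ a, W a a = 0) (i j : Fin n) (ξ : R) :
    (ext2 (Matrix.transvection i j ξ)).mulVec (fun I : Pair n => W I.1.1 I.1.2)
      = fun I : Pair n => step i j ξ W I.1.1 I.1.2 := by
  funext I
  obtain ⟨⟨a0, b0⟩, hI⟩ := I
  show ∑ J : Pair n, ext2 (Matrix.transvection i j ξ) ⟨(a0,b0),hI⟩ J * W J.1.1 J.1.2 = _
  simp only [ext2]
  rw [← Finset.sum_subtype (Finset.univ.filter fun p : Fin n × Fin n => p.1 < p.2) (by simp)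
      (fun p : Fin n × Fin n => (Matrix.transvection i j ξ a0 p.1 * Matrix.transvection i j ξ b0 p.2
        - Matrix.transvection i j ξ a0 p.2 * Matrix.transvection i j ξ b0 p.1) * W p.1 p.2)]
  rw [Finset.sum_filter, Fintype.sum_prod_type]
  simp only [Matrix.transvection, Matrix.add_apply, Matrix.one_apply, Matrix.single,
    Matrix.of_apply]
  have hpt : ∀ x y : Fin n,
      (if x < y then
          (((if a0 = x then (1:R) else 0) + if i = a0 ∧ j = x then ξ else 0) *
                ((if b0 = y then 1 else 0) + if i = b0 ∧ j = y then ξ else 0) -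
              ((if a0 = y then 1 else 0) + if i = a0 ∧ j = y then ξ else 0) *
                ((if b0 = x then 1 else 0) + if i = b0 ∧ j = x then ξ else 0)) *
            W x y
        else 0)
      = ((if x < y then (1:R) else 0) * (if a0 = x then 1 else 0) * (if b0 = y then 1 else 0) * W x y
        + (if i = b0 then (1:R) else 0) * ((if x < y then (1:R) else 0) * (if a0 = x then 1 else 0) * (if j = y then ξ else 0) * W x y)
        + (if i = a0 then (1:R) else 0) * ((if x < y then (1:R) else 0) * (if j = x then ξ else 0) * (if b0 = y then 1 else 0) * W x y)
        + (if i = a0 then (1:R) else 0) * ((if i = b0 then (1:R) else 0) * ((if x < y then (1:R) else 0) * (if j = x then ξ else 0) * (if j = y then ξ else 0) * W x y)))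
        - ((if x < y then (1:R) else 0) * (if b0 = x then 1 else 0) * (if a0 = y then 1 else 0) * W x y
        + (if i = b0 then (1:R) else 0) * ((if x < y then (1:R) else 0) * (if j = x then ξ else 0) * (if a0 = y then 1 else 0) * W x y)
        + (if i = a0 then (1:R) else 0) * ((if x < y then (1:R) else 0) * (if b0 = x then 1 else 0) * (if j = y then ξ else 0) * W x y)
        + (if i = a0 then (1:R) else 0) * ((if i = b0 then (1:R) else 0) * ((if x < y then (1:R) else 0) * (if j = x then ξ else 0) * (if j = y then ξ else 0) * W x y))) := by
    intro x y
    rw [myIteOneMul (x < y), ite_and_split (i = a0) (j = x), ite_and_split (i = b0) (j = y),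
      ite_and_split (i = a0) (j = y), ite_and_split (i = b0) (j = x)]
    ring
  simp only [hpt]
  simp only [Finset.sum_add_distrib, Finset.sum_sub_distrib, ← Finset.mul_sum]
  rw [gen a0 b0 1 1 W, gen a0 j 1 ξ W, gen j b0 ξ 1 W, gen j j ξ ξ W,
    gen b0 a0 1 1 W, gen j a0 ξ 1 W, gen b0 j 1 ξ W]
  have e1 : ((if a0 < j then ξ * W a0 j else 0) : R) - (if j < a0 then ξ * W j a0 else 0)
      = ξ * W a0 j := by
    rcases lt_trichotomy a0 j with h|h|h
    · simp [h, asymm h]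
    · simp [h, lt_irrefl, hdiag]
    · simp [asymm h, h, hskew a0 j]
  have e2 : ((if j < b0 then ξ * W j b0 else 0) : R) - (if b0 < j then ξ * W b0 j else 0)
      = ξ * W j b0 := by
    rcases lt_trichotomy j b0 with h|h|h
    · simp [h, asymm h]
    · simp [h, lt_irrefl, hdiag]
    · simp [asymm h, h, hskew j b0]
  simp only [step, lt_irrefl, if_neg (lt_irrefl j), hI, if_pos, asymm hI, if_neg]
  simp only [one_mul, mul_one] at e1 e2 ⊢
  rcases eq_or_ne i a0 with h1 | h1 <;> rcases eq_or_ne i b0 with h2 | h2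
  · exact absurd hI (by rw [← h1, ← h2] at hI ⊢; exact lt_irrefl _)
  · subst h1
    simp only [if_neg h2, if_neg (Ne.symm h2), eq_self_iff_true, if_true, if_false, zero_mul,
      mul_zero, one_mul, mul_one, add_zero, zero_add, sub_zero]
    linear_combination e2
  · subst h2
    simp only [if_neg h1, if_neg (Ne.symm h1), eq_self_iff_true, if_true, if_false, zero_mul,
      mul_zero, one_mul, mul_one, add_zero, zero_add, sub_zero]
    linear_combination e1
  · simp only [if_neg h1, if_neg h2, if_neg (Ne.symm h1), if_neg (Ne.symm h2), if_false,
      zero_mul, mul_zero, one_mul, mul_one, add_zero, zero_add, sub_zero]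

lemma step_skew {R : Type*} [CommRing R] {n : ℕ} (W : Fin n → Fin n → R)
    (hskew : ∀ a b, W a b = - W b a) (i j : Fin n) (ξ : R) :
    ∀ a b, step i j ξ W a b = - step i j ξ W b a := by
  intro a b
  simp only [step]
  split_ifs <;>
    first
      | linear_combination hskew a b + ξ * hskew j b + ξ * hskew a j
      | linear_combination hskew a b + ξ * hskew j b
      | linear_combination hskew a b + ξ * hskew a j
      | linear_combination hskew a b

lemma step_diag {R : Type*} [CommRing R] {n : ℕ} (W : Fin n → Fin n → R)
    (hskew : ∀ a b, W a b = - W b a) (hdiag : ∀ a, W a a = 0) (i j : Fin n) (ξ : R) :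
    ∀ a, step i j ξ W a a = 0 := by
  intro a
  simp only [step]
  split_ifs <;>
    first
      | linear_combination hdiag a + ξ * hskew j a
      | linear_combination hdiag a


set_option maxHeartbeats 2000000 in
/-- Stabilization via Plücker relations: if the coordinates of `w` (entries `W a b`, `a < b`,
extended skew-symmetrically, `W a a = 0`) satisfy all short Plücker relations, then
`T₁ = ⋀²t_{2,3}(w_{45})·⋀²t_{2,4}(−w_{35})·⋀²t_{2,5}(w_{34})` fixes `w`.
(Indices are `0`-based: paper index `k` is `⟨k-1,_⟩`.) -/
theorem stmt3 {R : Type*} [CommRing R] {n : ℕ} (hn : 5 ≤ n)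
    (W : Fin n → Fin n → R) (hskew : ∀ a b, W a b = - W b a) (hdiag : ∀ a, W a a = 0)
    (hpluck : ∀ i a b c : Fin n, a < b → b < c →
      W b c * W a i - W a c * W b i + W a b * W c i = 0) :
    (ext2 (Matrix.transvection (⟨1, by omega⟩ : Fin n) ⟨2, by omega⟩ (W ⟨3, by omega⟩ ⟨4, by omega⟩)) *
     ext2 (Matrix.transvection (⟨1, by omega⟩ : Fin n) ⟨3, by omega⟩ (- W ⟨2, by omega⟩ ⟨4, by omega⟩)) *
     ext2 (Matrix.transvection (⟨1, by omega⟩ : Fin n) ⟨4, by omega⟩ (W ⟨2, by omega⟩ ⟨3, by omega⟩))).mulVec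
      (fun I : Pair n => W I.1.1 I.1.2) = fun I : Pair n => W I.1.1 I.1.2 := by
  set o1 : Fin n := ⟨1, by omega⟩ with ho1
  set o2 : Fin n := ⟨2, by omega⟩ with ho2
  set o3 : Fin n := ⟨3, by omega⟩ with ho3
  set o4 : Fin n := ⟨4, by omega⟩ with ho4
  set W1 : Fin n → Fin n → R := step o1 o4 (W o2 o3) W with hW1
  set W2 : Fin n → Fin n → R := step o1 o3 (- W o2 o4) W1 with hW2
  have hsk1 := step_skew W hskew o1 o4 (W o2 o3)
  have hdg1 := step_diag W hskew hdiag o1 o4 (W o2 o3)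
  have hsk2 := step_skew W1 hsk1 o1 o3 (- W o2 o4)
  have hdg2 := step_diag W1 hsk1 hdg1 o1 o3 (- W o2 o4)
  rw [← Matrix.mulVec_mulVec, ← Matrix.mulVec_mulVec]
  rw [key W hskew hdiag o1 o4 (W o2 o3), ← hW1]
  rw [key W1 hsk1 hdg1 o1 o3 (- W o2 o4), ← hW2]
  rw [key W2 hsk2 hdg2 o1 o2 (W o3 o4)]
  funext I
  obtain ⟨⟨a, b⟩, hI⟩ := I
  show step o1 o2 (W o3 o4) W2 a b = W a b
  have h21 : o2 ≠ o1 := by simp [ho1, ho2, Fin.ext_iff]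
  have h31 : o3 ≠ o1 := by simp [ho1, ho3, Fin.ext_iff]
  have h41 : o4 ≠ o1 := by simp [ho1, ho4, Fin.ext_iff]
  have h23 : o2 < o3 := by simp [ho2, ho3, Fin.lt_def]
  have h34 : o3 < o4 := by simp [ho3, ho4, Fin.lt_def]
  by_cases ha : a = o1
  · have hb : b ≠ o1 := fun h => absurd hI (by rw [ha, h]; exact lt_irrefl _)
    simp only [hW2, hW1, step, ha, hb, h21, h31, h41, if_pos rfl, if_neg, if_false, add_zero,
      zero_add, mul_zero, mul_one, if_true]
    linear_combination hpluck b o2 o3 o4 h23 h34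
  · by_cases hb : b = o1
    · simp only [hW2, hW1, step, ha, hb, h21, h31, h41, if_pos rfl, if_neg, if_false, add_zero,
        zero_add, mul_zero, mul_one, if_true]
      linear_combination (-1 : R) * hpluck a o2 o3 o4 h23 h34 + W o3 o4 * hskew o2 a
        - W o2 o4 * hskew o3 a + W o2 o3 * hskew o4 a
    · simp [hW2, hW1, step, ha, hb]
end

section
/- Let R be a commutative ring, n ≥ 3, and 1 ≤ i < j ≤ n. The exterior square of the elementary transvection t_{i,j}(ξ) ∈ GL_n(R) equals the product ∏_{k=1}^{i-1} t_{ki,kj}(ξ) · ∏_{l=i+1}^{j-1} t_{il,lj}(−ξ) · ∏_{m=j+1}^{n} t_{im,jm}(ξ) of elementary transvections in GL_N(R), N = C(n,2), where indices of the big matrix are pairs from {1,…,n} listed in ascending order. -/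
open Matrix

section Aux
variable {R : Type*} [CommRing R] {N : Type*} [Fintype N] [DecidableEq N]

omit [Fintype N] [DecidableEq N] in
lemma list_sum_apply {ι : Type*} (L : List ι) (f : ι → Matrix N N R) (I J : N) :
    (L.map f).sum I J = (L.map (fun p => f p I J)).sum := by
  induction L with
  | nil => simp [Matrix.zero_apply]
  | cons p L ih => simp [Matrix.add_apply, ih]

omit [DecidableEq N] in
lemma mul_list_sum {ι : Type*} (A : Matrix N N R) (L : List ι) (f : ι → Matrix N N R) :
    A * (L.map f).sum = (L.map (fun p => A * f p)).sum := by
  induction L with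
  | nil => simp
  | cons p L ih => simp [mul_add, ih]

lemma key_s4 (L : List (N × N × R))
    (h : ∀ p ∈ L, ∀ q ∈ L, p.2.1 ≠ q.1) :
    (L.map (fun p => Matrix.transvection p.1 p.2.1 p.2.2)).prod
      = 1 + (L.map (fun p => Matrix.single p.1 p.2.1 p.2.2)).sum := by
  induction L with
  | nil => simp
  | cons p L ih =>
    simp only [List.map_cons, List.prod_cons, List.sum_cons]
    rw [ih (fun a ha b hb => h a (List.mem_cons_of_mem _ ha) b (List.mem_cons_of_mem _ hb))]
    rw [Matrix.transvection, add_mul, one_mul, mul_add, mul_one, mul_list_sum]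
    have hz : (L.map (fun q => Matrix.single p.1 p.2.1 p.2.2 *
        Matrix.single q.1 q.2.1 q.2.2)).sum = 0 := by
      apply List.sum_eq_zero
      intro x hx
      obtain ⟨q, hq, rfl⟩ := List.mem_map.mp hx
      exact Matrix.single_mul_single_of_ne
        (h := h p List.mem_cons_self q (List.mem_cons_of_mem _ hq)) ..
    rw [hz]
    abel

end Aux

/-- Proposition 1 (formula (1)): for `i < j`,
`⋀²t_{i,j}(ξ) = ∏_{k<i} t_{ki,kj}(ξ) · ∏_{i<l<j} t_{il,lj}(−ξ) · ∏_{m>j} t_{im,jm}(ξ)`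
in `GL_N(R)`.  (The factors pairwise commute, so the list order is immaterial.) -/
theorem stmt4 {R : Type*} [CommRing R] {n : ℕ} (hn : 3 ≤ n)
    (i j : Fin n) (hij : i < j) (ξ : R) :
    ext2 (Matrix.transvection i j ξ) =
      ((Finset.univ.filter (fun k : Fin n => k < i)).attach.toList.map
        (fun k => Matrix.transvection
          (⟨(k.1, i), (by exact (Finset.mem_filter.mp k.2).2)⟩ : Pair n)
          (⟨(k.1, j), (by exact lt_trans (Finset.mem_filter.mp k.2).2 hij)⟩ : Pair n) ξ)).prod *
      ((Finset.univ.filter (fun l : Fin n => i < l ∧ l < j)).attach.toList.map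
        (fun l => Matrix.transvection
          (⟨(i, l.1), (by exact (Finset.mem_filter.mp l.2).2.1)⟩ : Pair n)
          (⟨(l.1, j), (by exact (Finset.mem_filter.mp l.2).2.2)⟩ : Pair n) (-ξ))).prod *
      ((Finset.univ.filter (fun m : Fin n => j < m)).attach.toList.map
        (fun m => Matrix.transvection
          (⟨(i, m.1), (by exact lt_trans hij (Finset.mem_filter.mp m.2).2)⟩ : Pair n)
          (⟨(j, m.1), (by exact (Finset.mem_filter.mp m.2).2)⟩ : Pair n) ξ)).prod := by
  classical
  set s1 := Finset.univ.filter (fun k : Fin n => k < i) with hs1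
  set s2 := Finset.univ.filter (fun l : Fin n => i < l ∧ l < j) with hs2
  set s3 := Finset.univ.filter (fun m : Fin n => j < m) with hs3
  set bigL : List (Pair n × Pair n × R) :=
    s1.attach.toList.map (fun k => ((⟨(k.1, i), (by exact (Finset.mem_filter.mp k.2).2)⟩ : Pair n),
        (⟨(k.1, j), (by exact lt_trans (Finset.mem_filter.mp k.2).2 hij)⟩ : Pair n), ξ)) ++
    s2.attach.toList.map (fun l => ((⟨(i, l.1), (by exact (Finset.mem_filter.mp l.2).2.1)⟩ : Pair n),
        (⟨(l.1, j), (by exact (Finset.mem_filter.mp l.2).2.2)⟩ : Pair n), -ξ)) ++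
    s3.attach.toList.map (fun m => ((⟨(i, m.1), (by exact lt_trans hij (Finset.mem_filter.mp m.2).2)⟩ : Pair n),
        (⟨(j, m.1), (by exact (Finset.mem_filter.mp m.2).2)⟩ : Pair n), ξ)) with hbigL
  have hR : (bigL.map (fun p => Matrix.transvection p.1 p.2.1 p.2.2)).prod =
      (s1.attach.toList.map
        (fun k => Matrix.transvection
          (⟨(k.1, i), (by exact (Finset.mem_filter.mp k.2).2)⟩ : Pair n)
          (⟨(k.1, j), (by exact lt_trans (Finset.mem_filter.mp k.2).2 hij)⟩ : Pair n) ξ)).prod *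
      (s2.attach.toList.map
        (fun l => Matrix.transvection
          (⟨(i, l.1), (by exact (Finset.mem_filter.mp l.2).2.1)⟩ : Pair n)
          (⟨(l.1, j), (by exact (Finset.mem_filter.mp l.2).2.2)⟩ : Pair n) (-ξ))).prod *
      (s3.attach.toList.map
        (fun m => Matrix.transvection
          (⟨(i, m.1), (by exact lt_trans hij (Finset.mem_filter.mp m.2).2)⟩ : Pair n)
          (⟨(j, m.1), (by exact (Finset.mem_filter.mp m.2).2)⟩ : Pair n) ξ)).prod := by
    rw [hbigL]
    simp only [List.map_append, List.prod_append, List.map_map]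
    rfl
  rw [← hR, key_s4 bigL ?hyp]
  case hyp =>
    intro p hp q hq
    rw [hbigL] at hp hq
    simp only [List.mem_append, List.mem_map] at hp hq
    rcases hp with ((⟨x, -, rfl⟩ | ⟨x, -, rfl⟩) | ⟨x, -, rfl⟩) <;>
      rcases hq with ((⟨y, -, rfl⟩ | ⟨y, -, rfl⟩) | ⟨y, -, rfl⟩) <;>
    · have hx := (Finset.mem_filter.mp x.2).2
      have hy := (Finset.mem_filter.mp y.2).2
      simp only [ne_eq, Subtype.mk.injEq, Prod.mk.injEq, not_and]
      intro h1 h2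
      omega
  · ext I J
    obtain ⟨⟨a, b⟩, hab⟩ := I
    obtain ⟨⟨c, d⟩, hcd⟩ := J
    rw [Matrix.add_apply, list_sum_apply, hbigL]
    clear hR hbigL bigL
    simp only [List.map_append, List.sum_append, List.map_map]
    rw [Finset.sum_map_toList, Finset.sum_map_toList, Finset.sum_map_toList]
    simp only [Function.comp, Matrix.single, Matrix.of_apply, Subtype.mk.injEq,
      Prod.mk.injEq, Matrix.one_apply]
    rw [Finset.sum_attach s1 (fun v => if (v = a ∧ i = b) ∧ v = c ∧ j = d then ξ else 0),
      Finset.sum_attach s2 (fun v => if (i = a ∧ v = b) ∧ v = c ∧ j = d then -ξ else 0),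
      Finset.sum_attach s3 (fun v => if (i = a ∧ v = b) ∧ j = c ∧ v = d then ξ else 0),
      hs1, hs2, hs3, Finset.sum_filter, Finset.sum_filter, Finset.sum_filter]
    have e1 : (∑ k : Fin n, if k < i then (if (k = a ∧ i = b) ∧ k = c ∧ j = d then ξ else 0) else 0)
        = if a < i ∧ (a = a ∧ i = b) ∧ a = c ∧ j = d then ξ else 0 := by
      rw [Finset.sum_eq_single a
        (fun k _ hk => by split_ifs with h1 h2 <;> first | rfl | exact absurd h2.1.1 hk)
        (by simp)]
      split_ifs <;> tauto
    have e2 : (∑ l : Fin n, if i < l ∧ l < j then (if (i = a ∧ l = b) ∧ l = c ∧ j = d then -ξ else 0) else 0)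
        = if (i < b ∧ b < j) ∧ (i = a ∧ b = b) ∧ b = c ∧ j = d then -ξ else 0 := by
      rw [Finset.sum_eq_single b
        (fun k _ hk => by split_ifs with h1 h2 <;> first | rfl | exact absurd h2.1.2 hk)
        (by simp)]
      split_ifs <;> tauto
    have e3 : (∑ m : Fin n, if j < m then (if (i = a ∧ m = b) ∧ j = c ∧ m = d then ξ else 0) else 0)
        = if j < b ∧ (i = a ∧ b = b) ∧ j = c ∧ b = d then ξ else 0 := by
      rw [Finset.sum_eq_single b
        (fun k _ hk => by split_ifs with h1 h2 <;> first | rfl | exact absurd h2.1.2 hk)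
        (by simp)]
      split_ifs <;> tauto
    rw [e1, e2, e3]
    have hab' : a < b := hab
    have hcd' : c < d := hcd
    have hx : ∀ u v : Fin n, Matrix.transvection i j ξ u v
        = (if u = v then (1:R) else 0) + (if i = u ∧ j = v then ξ else 0) := by
      intro u v
      simp only [Matrix.transvection, Matrix.add_apply, Matrix.one_apply,
        Matrix.single, Matrix.of_apply]
    show Matrix.transvection i j ξ a c * Matrix.transvection i j ξ b d
        - Matrix.transvection i j ξ a d * Matrix.transvection i j ξ b c = _
    rw [hx a c, hx b d, hx a d, hx b c, add_mul, add_mul, mul_add, mul_add, mul_add, mul_add,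
      ite_zero_mul_ite_zero, ite_zero_mul_ite_zero, ite_zero_mul_ite_zero, ite_zero_mul_ite_zero,
      ite_zero_mul_ite_zero, ite_zero_mul_ite_zero, ite_zero_mul_ite_zero, ite_zero_mul_ite_zero,
      if_neg (show ¬((i = a ∧ j = c) ∧ (i = b ∧ j = d)) by omega),
      if_neg (show ¬(a = d ∧ b = c) by omega),
      if_neg (show ¬(a = d ∧ (i = b ∧ j = c)) by omega),
      if_neg (show ¬((i = a ∧ j = d) ∧ (i = b ∧ j = c)) by omega)]
    clear e1 e2 e3 hx hab hcd
    rw [if_congr (show (a < i ∧ (a = a ∧ i = b) ∧ a = c ∧ j = d) ↔ (a = c ∧ i = b ∧ j = d)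
          by omega) rfl rfl,
        if_congr (show ((i < b ∧ b < j) ∧ (i = a ∧ b = b) ∧ b = c ∧ j = d) ↔ ((i = a ∧ j = d) ∧ b = c)
          by omega) rfl rfl,
        if_congr (show (j < b ∧ (i = a ∧ b = b) ∧ j = c ∧ b = d) ↔ ((i = a ∧ j = c) ∧ b = d)
          by omega) rfl rfl]
    split_ifs <;> ring
end

section
/- Let R be a commutative ring, n ≥ 3, and let g ∈ GL_N(R) (N = C(n,2)) be a matrix satisfying the exterior-square equations: Σ_{B⊔D=H} sign(B,D)·g_{B,A}·g_{D,C} = 0 for every 4-element subset H of {1,…,n} partitioned into 2-element subsets B, D, and all pairs A, C with A ∩ C ≠ ∅. Suppose the column of g with index I = {i₁,i₂} is the standard basis vector e_I. Then for every K ∈ ⋀²({1,…,n}∖{i₁,i₂}) and every J ∈ ⋀²[n] with |I ∩ J| = 1, the entry g_{K,J} equals 0. -/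
open Matrix

/-- The entry `g_{{a,b},{c,d}}` of a matrix indexed by `⋀²[n]`, extended
skew-symmetrically to arbitrary (ordered) index pairs. -/
def ent {R : Type*} [CommRing R] {n : ℕ} (g : Matrix (Pair n) (Pair n) R)
    (a b c d : Fin n) : R :=
  if h1 : a < b then
    if h2 : c < d then g ⟨(a, b), h1⟩ ⟨(c, d), h2⟩
    else if h2' : d < c then -g ⟨(a, b), h1⟩ ⟨(d, c), h2'⟩ else 0
  else if h1' : b < a then
    if h2 : c < d then -g ⟨(b, a), h1'⟩ ⟨(c, d), h2⟩
    else if h2' : d < c then g ⟨(b, a), h1'⟩ ⟨(d, c), h2'⟩ else 0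
  else 0

/-- `A ∩ C ≠ ∅` for two elements `A, C` of `⋀²[n]`. -/
def meets {n : ℕ} (A C : Pair n) : Prop :=
  A.1.1 = C.1.1 ∨ A.1.1 = C.1.2 ∨ A.1.2 = C.1.1 ∨ A.1.2 = C.1.2

/-- `a_{A,C}^H(g) = Σ_{B⊔D=H} sign(B,D)·g_{B,A}·g_{D,C}`, for `H = {h₁<h₂<h₃<h₄}`,
`A = {a,b}`, `C = {c,d}`: the sum over the six ordered partitions of `H` into
two-element subsets `B, D`, with the sign of the permutation sorting `(B,D)`. -/
def qsum {R : Type*} [CommRing R] {n : ℕ} (g : Matrix (Pair n) (Pair n) R)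
    (h1 h2 h3 h4 a b c d : Fin n) : R :=
  ent g h1 h2 a b * ent g h3 h4 c d - ent g h1 h3 a b * ent g h2 h4 c d
    + ent g h1 h4 a b * ent g h2 h3 c d + ent g h2 h3 a b * ent g h1 h4 c d
    - ent g h2 h4 a b * ent g h1 h3 c d + ent g h3 h4 a b * ent g h1 h2 c d

/-- Lemma (parabolic descent): if `g ∈ GL_N(R)` satisfies the exterior-square equations
`a_{A,C}^H(g) = 0` for all `H ∈ ⋀⁴[n]` and all `A, C` with `A ∩ C ≠ ∅`, and the column
of `g` at `I` is the standard basis vector `e_I`, then `g_{K,J} = 0` for every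
`K ∈ ⋀²([n]∖I)` and every `J` with `|I ∩ J| = 1`. -/
theorem stmt6 {R : Type*} [CommRing R] {n : ℕ} (hn : 3 ≤ n)
    (g : Matrix (Pair n) (Pair n) R) (hg : IsUnit g)
    (heq : ∀ h1 h2 h3 h4 : Fin n, h1 < h2 → h2 < h3 → h3 < h4 →
      ∀ a b c d : Fin n, a < b → c < d → (a = c ∨ a = d ∨ b = c ∨ b = d) →
        qsum g h1 h2 h3 h4 a b c d = 0)
    (I : Pair n) (hcol : ∀ K : Pair n, g K I = if K = I then 1 else 0) :
    ∀ K J : Pair n, ¬ meets K I → meets I J → I ≠ J → g K J = 0 := by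
  intro K J hKI hIJ hne
  obtain ⟨⟨i1, i2⟩, hi⟩ := I
  obtain ⟨⟨k1, k2⟩, hk⟩ := K
  obtain ⟨⟨c, d⟩, hc⟩ := J
  replace hi : i1 < i2 := hi
  replace hk : k1 < k2 := hk
  replace hc : c < d := hc
  simp only [meets] at hKI hIJ
  push_neg at hKI
  obtain ⟨n11, n12, n21, n22⟩ := hKI
  have hE : ∀ x y : Fin n, ent g x y i1 i2 =
      if x = i1 ∧ y = i2 then 1 else if x = i2 ∧ y = i1 then -1 else 0 := by
    intro x y
    rcases lt_trichotomy x y with h | h | h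
    · rw [ent, dif_pos h, dif_pos hi, hcol]
      simp only [Subtype.mk.injEq, Prod.mk.injEq]
      by_cases hb : x = i1 ∧ y = i2
      · rw [if_pos hb, if_pos hb]
      · rw [if_neg hb, if_neg hb]
        by_cases hcc : x = i2 ∧ y = i1
        · exfalso; obtain ⟨rfl, rfl⟩ := hcc; omega
        · rw [if_neg hcc]
    · subst h
      rw [ent, dif_neg (lt_irrefl x), dif_neg (lt_irrefl x)]
      by_cases hb : x = i1 ∧ x = i2
      · exfalso; obtain ⟨rfl, rfl⟩ := hb; omega
      · rw [if_neg hb]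
        by_cases hcc : x = i2 ∧ x = i1
        · exfalso; obtain ⟨rfl, rfl⟩ := hcc; omega
        · rw [if_neg hcc]
    · rw [ent, dif_neg (asymm h), dif_pos h, dif_pos hi, hcol]
      simp only [Subtype.mk.injEq, Prod.mk.injEq]
      by_cases hb : x = i1 ∧ y = i2
      · exfalso; obtain ⟨rfl, rfl⟩ := hb; omega
      · rw [if_neg hb]
        by_cases hcc : x = i2 ∧ y = i1
        · rw [if_pos hcc, if_pos ⟨hcc.2, hcc.1⟩]
        · rw [if_neg hcc, if_neg (fun hA : y = i1 ∧ x = i2 => hcc ⟨hA.2, hA.1⟩), neg_zero]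
  have key : ∀ p1 p2 p3 p4 : Fin n, p1 < p2 → p2 < p3 → p3 < p4 →
      qsum g p1 p2 p3 p4 i1 i2 c d = 0 :=
    fun p1 p2 p3 p4 o1 o2 o3 => heq p1 p2 p3 p4 o1 o2 o3 i1 i2 c d hi hc hIJ
  have fin : ent g k1 k2 c d = 0 → g ⟨(k1, k2), hk⟩ ⟨(c, d), hc⟩ = 0 := by
    rw [ent, dif_pos hk, dif_pos hc]; exact id
  rcases lt_trichotomy k1 i1 with o1 | o1 | o1
  · rcases lt_trichotomy k2 i1 with o2 | o2 | o2
    · -- k1 < k2 < i1 < i2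
      have H := key k1 k2 i1 i2 hk o2 hi
      simp only [qsum, hE, n11, n12, n21, n22, hi.ne, hi.ne'] at H
      apply fin; simpa [n11, n12, n21, n22, hi.ne, hi.ne'] using H
    · exact absurd o2 n21
    · rcases lt_trichotomy k2 i2 with o3 | o3 | o3
      · -- k1 < i1 < k2 < i2
        have H := key k1 i1 k2 i2 o1 o2 o3
        apply fin; simpa [qsum, hE, n11, n12, n21, n22, hi.ne, hi.ne'] using H
      · exact absurd o3 n22
      · -- k1 < i1 < i2 < k2
        have H := key k1 i1 i2 k2 o1 hi o3
        apply fin; simpa [qsum, hE, n11, n12, n21, n22, hi.ne, hi.ne'] using H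
  · exact absurd o1 n11
  · rcases lt_trichotomy k1 i2 with o2 | o2 | o2
    · rcases lt_trichotomy k2 i2 with o3 | o3 | o3
      · -- i1 < k1 < k2 < i2
        have H := key i1 k1 k2 i2 o1 hk o3
        apply fin; simpa [qsum, hE, n11, n12, n21, n22, hi.ne, hi.ne'] using H
      · exact absurd o3 n22
      · -- i1 < k1 < i2 < k2
        have H := key i1 k1 i2 k2 o1 o2 o3
        apply fin; simpa [qsum, hE, n11, n12, n21, n22, hi.ne, hi.ne'] using H
    · exact absurd o2 n12
    · -- i1 < i2 < k1 < k2
      have H := key i1 i2 k1 k2 hi o2 hk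
      apply fin; simpa [qsum, hE, n11, n12, n21, n22, hi.ne, hi.ne'] using H
end

section
/- Let R be a commutative ring and n ≥ 2. For 1 ≤ i < j ≤ n, the (I,J) entry of the exterior square ⋀²(t_{i,j}(ξ)) of the elementary transvection equals: 1 if I = J; ξ·sign factor if (I,J) is one of the pairs ({k,i},{k,j}) for k < i, ({i,l},{l,j}) for i < l < j (with entry −ξ), or ({i,m},{j,m}) for m > j (with entry ξ); and 0 otherwise. -/
set_option maxHeartbeats 4000000


open Matrix

/-- Entries of the exterior square of an elementary transvection (`i < j`):
`1` on the diagonal; `ξ` at `({k,i},{k,j})` for `k < i`; `−ξ` at `({i,l},{l,j})` for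
`i < l < j`; `ξ` at `({i,m},{j,m})` for `m > j`; and `0` elsewhere. -/
theorem stmt12 {R : Type*} [CommRing R] {n : ℕ} (hn : 2 ≤ n) (i j : Fin n) (hij : i < j)
    (ξ : R) (I J : Pair n) :
    ext2 (Matrix.transvection i j ξ) I J =
      if I = J then 1
      else if I.1.2 = i ∧ J.1.1 = I.1.1 ∧ J.1.2 = j then ξ
      else if I.1.1 = i ∧ J.1.1 = I.1.2 ∧ I.1.2 < j ∧ J.1.2 = j then -ξ
      else if I.1.1 = i ∧ J.1.1 = j ∧ j < I.1.2 ∧ J.1.2 = I.1.2 then ξ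
      else 0 := by
  obtain ⟨⟨a, b⟩, hab⟩ := I
  obtain ⟨⟨c, d⟩, hcd⟩ := J
  dsimp only at hab hcd
  have hE : ∀ a b : Fin n, Matrix.transvection i j ξ a b =
      (if a = b then 1 else 0) + (if i = a ∧ j = b then ξ else 0) := by
    intro a b; simp [Matrix.transvection, Matrix.single, Matrix.one_apply]
  simp only [ext2, hE, Subtype.mk.injEq, Prod.mk.injEq]
  simp only [Fin.ext_iff, Fin.lt_def] at *
  split_ifs <;> first | ring1 | omega | (exfalso; omega)
end

section
/- Let R be a commutative ring, n ≥ 4, g an n×n matrix over R, and i ≠ j indices. For any two distinct indices h₁, h₂ ∈ {1,…,n}∖{i,j}, the entry of the conjugate ⋀²(t_{i,j}(−1))·⋀²(g)·⋀²(t_{i,j}(−1))^{-1} in position ({i,h₁},{i,h₂}) equals (⋀²g)_{{j,h₁},{i,h₂}} + (⋀²g)_{{i,h₁},{i,h₂}} (up to the appropriate ± signs determined by the ordering of indices in the pairs). -/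
open Matrix

namespace Aux14

variable {R : Type*} [CommRing R] {n : ℕ}

/-- The "correction" matrix: `⋀²(t_{i,j}(c)) = 1 + c • Em i j`. -/
def Em (R : Type*) [CommRing R] {n : ℕ} (i j : Fin n) : Matrix (Pair n) (Pair n) R :=
  fun A B =>
    if A.1.1 = B.1.1 ∧ A.1.2 = i ∧ B.1.2 = j then 1
    else if A.1.2 = B.1.2 ∧ A.1.1 = i ∧ B.1.1 = j then 1
    else if A.1.1 = B.1.2 ∧ A.1.2 = i ∧ B.1.1 = j then -1
    else if A.1.2 = B.1.1 ∧ A.1.1 = i ∧ B.1.2 = j then -1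
    else 0

lemma tv_apply (i j a b : Fin n) (c : R) :
    Matrix.transvection i j c a b = (if a = b then 1 else 0) + (if a = i ∧ b = j then c else 0) := by
  simp [Matrix.transvection, Matrix.one_apply, Matrix.single]
  split_ifs <;> simp_all

set_option maxHeartbeats 1000000 in
lemma ext2_tv (i j : Fin n) (hij : i ≠ j) (c : R) :
    ext2 (Matrix.transvection i j c) = 1 + c • Em R i j := by
  ext A B
  rcases A with ⟨⟨p, q⟩, hpq⟩
  rcases B with ⟨⟨r, s⟩, hrs⟩
  dsimp only at hpq hrs
  simp only [ext2, Em, tv_apply, Matrix.add_apply, Matrix.smul_apply, Matrix.one_apply,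
    Subtype.mk.injEq, Prod.mk.injEq, smul_eq_mul]
  by_cases h1 : p = i <;> by_cases h2 : q = i <;> by_cases h3 : r = j <;> by_cases h4 : s = j <;>
    simp_all
  all_goals try split_ifs
  all_goals try ring
  all_goals (intros; exfalso; omega)

lemma Em_mul_Em (i j : Fin n) (hij : i ≠ j) : (Em R i j) * (Em R i j) = 0 := by
  ext A B
  rw [Matrix.mul_apply, Matrix.zero_apply]
  apply Finset.sum_eq_zero
  intro C _
  rcases A with ⟨⟨p, q⟩, hpq⟩
  rcases C with ⟨⟨r, s⟩, hrs⟩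
  rcases B with ⟨⟨u, v⟩, huv⟩
  dsimp only at hpq hrs huv
  simp only [Em]
  split_ifs
  all_goals try ring
  all_goals (exfalso; omega)

lemma Em_col_eq_zero (i j : Fin n) (D J : Pair n) (hJ1 : J.1.1 ≠ j) (hJ2 : J.1.2 ≠ j) :
    Em R i j D J = 0 := by
  rcases D with ⟨⟨p, q⟩, hpq⟩
  rcases J with ⟨⟨u, v⟩, huv⟩
  simp only [Em]
  split_ifs <;> simp_all

lemma inv_eq (i j : Fin n) (hij : i ≠ j) :
    (ext2 (Matrix.transvection i j (-1)) : Matrix (Pair n) (Pair n) R)⁻¹ =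
      ext2 (Matrix.transvection i j 1) := by
  apply Matrix.inv_eq_right_inv
  rw [ext2_tv i j hij, ext2_tv i j hij, neg_one_smul, one_smul]
  have h := Em_mul_Em (R := R) i j hij
  have e2 : (1 + -Em R i j) * (1 + Em R i j) = 1 - Em R i j * Em R i j := by noncomm_ring
  rw [e2, h, sub_zero]

lemma entry_lemma (i j : Fin n) (hij : i ≠ j) (M : Matrix (Pair n) (Pair n) R)
    (I J K : Pair n) (e : R)
    (hJ1 : J.1.1 ≠ j) (hJ2 : J.1.2 ≠ j)
    (hI : ∀ C, C ≠ K → Em R i j I C = 0)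
    (hIK : Em R i j I K = e) :
    (ext2 (Matrix.transvection i j (-1)) * M * ext2 (Matrix.transvection i j 1) :
        Matrix (Pair n) (Pair n) R) I J
      = M I J - e * M K J := by
  rw [ext2_tv i j hij, ext2_tv i j hij, neg_one_smul, one_smul]
  have colJ : ∀ (X : Matrix (Pair n) (Pair n) R), (X * Em R i j) I J = 0 := by
    intro X
    rw [Matrix.mul_apply]
    apply Finset.sum_eq_zero
    intro D _
    rw [Em_col_eq_zero i j D J hJ1 hJ2, mul_zero]
  have rowI : ∀ (X : Matrix (Pair n) (Pair n) R), (Em R i j * X) I J = e * X K J := by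
    intro X
    rw [Matrix.mul_apply]
    rw [Finset.sum_eq_single K]
    · rw [hIK]
    · intro C _ hC; rw [hI C hC, zero_mul]
    · intro h; exact absurd (Finset.mem_univ K) h
  have expand : (1 + -Em R i j) * M * (1 + Em R i j)
      = M + M * Em R i j - Em R i j * M - Em R i j * M * Em R i j := by
    noncomm_ring
  rw [expand]
  simp only [Matrix.sub_apply, Matrix.add_apply]
  rw [colJ M, colJ (Em R i j * M), rowI M]
  ring

lemma ent_pp (Y : Matrix (Pair n) (Pair n) R) {a b c d : Fin n} (h1 : a < b) (h2 : c < d) :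
    ent Y a b c d = Y ⟨(a, b), h1⟩ ⟨(c, d), h2⟩ := by
  unfold ent; rw [dif_pos h1, dif_pos h2]

lemma ent_pn (Y : Matrix (Pair n) (Pair n) R) {a b c d : Fin n} (h1 : a < b) (h2 : d < c) :
    ent Y a b c d = -Y ⟨(a, b), h1⟩ ⟨(d, c), h2⟩ := by
  unfold ent; rw [dif_pos h1, dif_neg (asymm h2), dif_pos h2]

lemma ent_np (Y : Matrix (Pair n) (Pair n) R) {a b c d : Fin n} (h1 : b < a) (h2 : c < d) :
    ent Y a b c d = -Y ⟨(b, a), h1⟩ ⟨(c, d), h2⟩ := by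
  unfold ent; rw [dif_neg (asymm h1), dif_pos h1, dif_pos h2]

lemma ent_nn (Y : Matrix (Pair n) (Pair n) R) {a b c d : Fin n} (h1 : b < a) (h2 : d < c) :
    ent Y a b c d = Y ⟨(b, a), h1⟩ ⟨(d, c), h2⟩ := by
  unfold ent; rw [dif_neg (asymm h1), dif_pos h1, dif_neg (asymm h2), dif_pos h2]

lemma Erow (i j h : Fin n) (hij : i ≠ j) (hhi : h ≠ i) (hhj : h ≠ j) (I K : Pair n)
    (hI : I.1 = (i, h) ∨ I.1 = (h, i)) (hK : K.1 = (h, j) ∨ K.1 = (j, h)) :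
    ∀ C, C ≠ K → Em R i j I C = 0 := by
  intro C hC
  rcases I with ⟨⟨p, q⟩, hpq⟩
  rcases C with ⟨⟨r, s⟩, hrs⟩
  rcases K with ⟨⟨u, v⟩, huv⟩
  have hC' : ¬(r = u ∧ s = v) := by
    rintro ⟨rfl, rfl⟩; exact hC (Subtype.ext rfl)
  simp only [Prod.mk.injEq] at hI hK
  dsimp only at hpq hrs huv
  simp only [Em]
  split_ifs
  all_goals try rfl
  all_goals (exfalso; omega)

lemma ErowVal (i j h : Fin n) (hij : i ≠ j) (hhi : h ≠ i) (hhj : h ≠ j) (I K : Pair n) (e : R)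
    (hc : (I.1 = (i, h) ∧ K.1 = (h, j) ∧ e = -1) ∨ (I.1 = (i, h) ∧ K.1 = (j, h) ∧ e = 1) ∨
      (I.1 = (h, i) ∧ K.1 = (h, j) ∧ e = 1) ∨ (I.1 = (h, i) ∧ K.1 = (j, h) ∧ e = -1)) :
    Em R i j I K = e := by
  rcases I with ⟨⟨p, q⟩, hpq⟩
  rcases K with ⟨⟨u, v⟩, huv⟩
  simp only [Prod.mk.injEq] at hc
  dsimp only at hpq huv
  simp only [Em]
  obtain ⟨⟨rfl, rfl⟩, ⟨rfl, rfl⟩, rfl⟩ | ⟨⟨rfl, rfl⟩, ⟨rfl, rfl⟩, rfl⟩ |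
    ⟨⟨rfl, rfl⟩, ⟨rfl, rfl⟩, rfl⟩ | ⟨⟨rfl, rfl⟩, ⟨rfl, rfl⟩, rfl⟩ := hc <;>
    (split_ifs
     all_goals try ring
     all_goals (exfalso; omega))

end Aux14

open Aux14 in
/-- The entry of `⋀²(t_{i,j}(−1))·⋀²g·⋀²(t_{i,j}(−1))⁻¹` in position `({i,h₁},{i,h₂})`
equals `(⋀²g)_{{j,h₁},{i,h₂}} + (⋀²g)_{{i,h₁},{i,h₂}}`, up to the `±` signs determined
by the ordering of the indices in the pairs (here written via the skew-symmetric entry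
function `ent`, with the row pair of the first summand ordered as `(h₁,j)`). -/
theorem stmt14 {R : Type*} [CommRing R] {n : ℕ} (hn : 4 ≤ n)
    (g : Matrix (Fin n) (Fin n) R) (i j h1 h2 : Fin n) (hij : i ≠ j) (h12 : h1 ≠ h2)
    (hi1 : h1 ≠ i) (hj1 : h1 ≠ j) (hi2 : h2 ≠ i) (hj2 : h2 ≠ j) :
    ent (ext2 (Matrix.transvection i j (-1)) * ext2 g *
        (ext2 (Matrix.transvection i j (-1)) : Matrix (Pair n) (Pair n) R)⁻¹) i h1 i h2 =
      ent (ext2 g) h1 j i h2 + ent (ext2 g) i h1 i h2 := by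
  rw [inv_eq i j hij]
  rcases hi1.lt_or_gt with hA | hA <;> rcases hi2.lt_or_gt with hB | hB <;>
    rcases hj1.lt_or_gt with hC | hC
  · -- h1<i, h2<i, h1<j
    rw [ent_nn _ hA hB, ent_pn _ hC hB, ent_nn _ hA hB,
      entry_lemma i j hij (ext2 g) ⟨(h1, i), hA⟩ ⟨(h2, i), hB⟩ ⟨(h1, j), hC⟩ 1 hj2 hij
        (Erow i j h1 hij hi1 hj1 _ _ (Or.inr rfl) (Or.inl rfl))
        (ErowVal i j h1 hij hi1 hj1 _ _ 1 (Or.inr (Or.inr (Or.inl ⟨rfl, rfl, rfl⟩))))]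
    ring
  · -- h1<i, h2<i, j<h1
    rw [ent_nn _ hA hB, ent_nn _ hC hB, ent_nn _ hA hB,
      entry_lemma i j hij (ext2 g) ⟨(h1, i), hA⟩ ⟨(h2, i), hB⟩ ⟨(j, h1), hC⟩ (-1) hj2 hij
        (Erow i j h1 hij hi1 hj1 _ _ (Or.inr rfl) (Or.inr rfl))
        (ErowVal i j h1 hij hi1 hj1 _ _ (-1) (Or.inr (Or.inr (Or.inr ⟨rfl, rfl, rfl⟩))))]
    ring
  · -- h1<i, i<h2, h1<j
    rw [ent_np _ hA hB, ent_pp _ hC hB, ent_np _ hA hB,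
      entry_lemma i j hij (ext2 g) ⟨(h1, i), hA⟩ ⟨(i, h2), hB⟩ ⟨(h1, j), hC⟩ 1 hij hj2
        (Erow i j h1 hij hi1 hj1 _ _ (Or.inr rfl) (Or.inl rfl))
        (ErowVal i j h1 hij hi1 hj1 _ _ 1 (Or.inr (Or.inr (Or.inl ⟨rfl, rfl, rfl⟩))))]
    ring
  · -- h1<i, i<h2, j<h1
    rw [ent_np _ hA hB, ent_np _ hC hB, ent_np _ hA hB,
      entry_lemma i j hij (ext2 g) ⟨(h1, i), hA⟩ ⟨(i, h2), hB⟩ ⟨(j, h1), hC⟩ (-1) hij hj2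
        (Erow i j h1 hij hi1 hj1 _ _ (Or.inr rfl) (Or.inr rfl))
        (ErowVal i j h1 hij hi1 hj1 _ _ (-1) (Or.inr (Or.inr (Or.inr ⟨rfl, rfl, rfl⟩))))]
    ring
  · -- i<h1, h2<i, h1<j
    rw [ent_pn _ hA hB, ent_pn _ hC hB, ent_pn _ hA hB,
      entry_lemma i j hij (ext2 g) ⟨(i, h1), hA⟩ ⟨(h2, i), hB⟩ ⟨(h1, j), hC⟩ (-1) hj2 hij
        (Erow i j h1 hij hi1 hj1 _ _ (Or.inl rfl) (Or.inl rfl))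
        (ErowVal i j h1 hij hi1 hj1 _ _ (-1) (Or.inl ⟨rfl, rfl, rfl⟩))]
    ring
  · -- i<h1, h2<i, j<h1
    rw [ent_pn _ hA hB, ent_nn _ hC hB, ent_pn _ hA hB,
      entry_lemma i j hij (ext2 g) ⟨(i, h1), hA⟩ ⟨(h2, i), hB⟩ ⟨(j, h1), hC⟩ 1 hj2 hij
        (Erow i j h1 hij hi1 hj1 _ _ (Or.inl rfl) (Or.inr rfl))
        (ErowVal i j h1 hij hi1 hj1 _ _ 1 (Or.inr (Or.inl ⟨rfl, rfl, rfl⟩)))]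
    ring
  · -- i<h1, i<h2, h1<j
    rw [ent_pp _ hA hB, ent_pp _ hC hB, ent_pp _ hA hB,
      entry_lemma i j hij (ext2 g) ⟨(i, h1), hA⟩ ⟨(i, h2), hB⟩ ⟨(h1, j), hC⟩ (-1) hij hj2
        (Erow i j h1 hij hi1 hj1 _ _ (Or.inl rfl) (Or.inl rfl))
        (ErowVal i j h1 hij hi1 hj1 _ _ (-1) (Or.inl ⟨rfl, rfl, rfl⟩))]
    ring
  · -- i<h1, i<h2, j<h1
    rw [ent_pp _ hA hB, ent_np _ hC hB, ent_pp _ hA hB,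
      entry_lemma i j hij (ext2 g) ⟨(i, h1), hA⟩ ⟨(i, h2), hB⟩ ⟨(j, h1), hC⟩ 1 hij hj2
        (Erow i j h1 hij hi1 hj1 _ _ (Or.inl rfl) (Or.inr rfl))
        (ErowVal i j h1 hij hi1 hj1 _ _ 1 (Or.inr (Or.inl ⟨rfl, rfl, rfl⟩)))]
    ring
end

section
/- Let R be a commutative ring, n ≥ 3, g an n×n matrix over R, i ≠ j, and h an index with h ≠ i, h ≠ j. Then the entry of ⋀²(t_{i,j}(1)·g·t_{i,j}(1)^{-1}) in the position ({i,h},{j,h}) equals (⋀²g)_{{i,h},{i,h}} − (⋀²g)_{{j,h},{j,h}} + (⋀²g)_{{i,h},{j,h}} − (⋀²g)_{{j,h},{i,h}} (with signs determined by ascending ordering of the pairs). -/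
open Matrix

lemma ent_ext2 {R : Type*} [CommRing R] {n : ℕ} (x : Matrix (Fin n) (Fin n) R)
    (a b c d : Fin n) :
    ent (ext2 x) a b c d = x a c * x b d - x a d * x b c := by
  unfold ent ext2
  rcases lt_trichotomy a b with h1 | h1 | h1 <;>
    rcases lt_trichotomy c d with h2 | h2 | h2 <;>
    simp_all [lt_asymm, lt_irrefl] <;> subst_vars <;> ring

/-- The entry of `⋀²(t_{i,j}(1)·g·t_{i,j}(1)⁻¹)` in position `({i,h},{j,h})` equals
`(⋀²g)_{{i,h},{i,h}} − (⋀²g)_{{j,h},{j,h}} + (⋀²g)_{{i,h},{j,h}} − (⋀²g)_{{j,h},{i,h}}`,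
up to the `±` signs determined by the ascending ordering of the pairs (written via the
skew-symmetric entry function `ent`; with this left conjugation the first two terms
acquire a minus sign). -/
theorem stmt15 {R : Type*} [CommRing R] {n : ℕ} (hn : 3 ≤ n)
    (g : Matrix (Fin n) (Fin n) R) (i j h : Fin n) (hij : i ≠ j) (hhi : h ≠ i)
    (hhj : h ≠ j) :
    ent (ext2 (Matrix.transvection i j 1 * g *
        (Matrix.transvection i j 1 : Matrix (Fin n) (Fin n) R)⁻¹)) i h j h =
      - ent (ext2 g) i h i h + ent (ext2 g) j h j h
        + ent (ext2 g) i h j h - ent (ext2 g) j h i h := by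
  have hinv : (Matrix.transvection i j 1 : Matrix (Fin n) (Fin n) R)⁻¹ =
      Matrix.transvection i j (-1) := by
    apply Matrix.inv_eq_right_inv
    rw [Matrix.transvection_mul_transvection_same (h := hij), add_neg_cancel,
      Matrix.transvection_zero]
  rw [hinv]
  simp only [ent_ext2]
  set M := Matrix.transvection i j 1 * g * Matrix.transvection i j (-1) with hM
  have e1 : M i j = g i j + g j j - (g i i + g j i) := by
    rw [hM, Matrix.mul_transvection_apply_same, Matrix.transvection_mul_apply_same,
      Matrix.transvection_mul_apply_same]
    ring
  have e2 : M h h = g h h := by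
    rw [hM, Matrix.mul_transvection_apply_of_ne (hb := hhj),
      Matrix.transvection_mul_apply_of_ne (ha := hhi)]
  have e3 : M i h = g i h + g j h := by
    rw [hM, Matrix.mul_transvection_apply_of_ne (hb := hhj),
      Matrix.transvection_mul_apply_same]
    ring
  have e4 : M h j = g h j - g h i := by
    rw [hM, Matrix.mul_transvection_apply_same,
      Matrix.transvection_mul_apply_of_ne (ha := hhi),
      Matrix.transvection_mul_apply_of_ne (ha := hhi)]
    ring
  rw [e1, e2, e3, e4]
  ring
end
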